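/- Let g_1, …, g_m ∈ ℝ[x_1,…,x_n], let R ≥ 1, and let t ≥ 1 be an integer. Assume that for each i ∈ {1,…,n} the polynomial R² − x_i² belongs to the truncated quadratic module M(g)_2. Then for every polynomial E ∈ ℝ[x_1,…,x_n] of degree at most 2t, the polynomial R^{2t}·‖E‖₁ − E belongs to M(g)_{2t}, where ‖E‖₁ denotes the sum of the absolute values of the coefficients of E. -/

import Mathlib

open MvPolynomial

/-- A polynomial is a sum of squares. -/
def IsSumOfSquares {n : ℕ} (p : MvPolynomial (Fin n) ℝ) : Prop :=
  ∃ (k : ℕ) (s : Fin k → MvPolynomial (Fin n) ℝ), p = ∑ j, (s j) ^ 2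

/-- Membership in the truncated quadratic module `M(g)_{2t}`: `p = σ₀ + Σᵢ σᵢ·gᵢ` with each
`σᵢ` a sum of squares, `deg σ₀ ≤ 2t` and `deg(σᵢ gᵢ) ≤ 2t`. -/
def MemTruncQuadModule {n m : ℕ} (g : Fin m → MvPolynomial (Fin n) ℝ) (t : ℕ)
    (p : MvPolynomial (Fin n) ℝ) : Prop :=
  ∃ σ₀ : MvPolynomial (Fin n) ℝ, ∃ σ : Fin m → MvPolynomial (Fin n) ℝ,
    IsSumOfSquares σ₀ ∧ (∀ i, IsSumOfSquares (σ i)) ∧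
    σ₀.totalDegree ≤ 2 * t ∧ (∀ i, (σ i * g i).totalDegree ≤ 2 * t) ∧
    p = σ₀ + ∑ i, σ i * g i

section Aux

variable {n m : ℕ}

lemma sos_zero : IsSumOfSquares (0 : MvPolynomial (Fin n) ℝ) :=
  ⟨0, fun j => 0, by simp⟩

lemma sos_sq (q : MvPolynomial (Fin n) ℝ) : IsSumOfSquares (q ^ 2) :=
  ⟨1, fun _ => q, by simp⟩

lemma sos_add {p q : MvPolynomial (Fin n) ℝ} (hp : IsSumOfSquares p)
    (hq : IsSumOfSquares q) : IsSumOfSquares (p + q) := by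
  obtain ⟨k, s, rfl⟩ := hp
  obtain ⟨l, u, rfl⟩ := hq
  exact ⟨k + l, Fin.append s u, by rw [Fin.sum_univ_add]; simp⟩

lemma sos_mul_sq {p : MvPolynomial (Fin n) ℝ} (q : MvPolynomial (Fin n) ℝ)
    (hp : IsSumOfSquares p) : IsSumOfSquares (q ^ 2 * p) := by
  obtain ⟨k, s, rfl⟩ := hp
  exact ⟨k, fun j => q * s j, by rw [Finset.mul_sum]; simp [mul_pow]⟩

lemma sos_const {c : ℝ} (hc : 0 ≤ c) : IsSumOfSquares (C c : MvPolynomial (Fin n) ℝ) := by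
  refine ⟨1, fun _ => C (Real.sqrt c), ?_⟩
  rw [Fin.sum_univ_one, ← map_pow, Real.sq_sqrt hc]

variable (g : Fin m → MvPolynomial (Fin n) ℝ)

lemma mem_of_sos {t : ℕ} {p : MvPolynomial (Fin n) ℝ} (hp : IsSumOfSquares p)
    (hd : p.totalDegree ≤ 2 * t) : MemTruncQuadModule g t p :=
  ⟨p, fun _ => 0, hp, fun _ => sos_zero, hd, fun i => by simp, by simp⟩

lemma mem_zero {t : ℕ} : MemTruncQuadModule g t (0 : MvPolynomial (Fin n) ℝ) :=
  mem_of_sos g sos_zero (by simp)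

lemma mem_add {t : ℕ} {p q : MvPolynomial (Fin n) ℝ}
    (hp : MemTruncQuadModule g t p) (hq : MemTruncQuadModule g t q) :
    MemTruncQuadModule g t (p + q) := by
  obtain ⟨σ₀, σ, hσ₀, hσ, hd₀, hd, rfl⟩ := hp
  obtain ⟨τ₀, τ, hτ₀, hτ, he₀, he, rfl⟩ := hq
  refine ⟨σ₀ + τ₀, fun i => σ i + τ i, sos_add hσ₀ hτ₀, fun i => sos_add (hσ i) (hτ i),
    le_trans (totalDegree_add _ _) (max_le hd₀ he₀), fun i => ?_, ?_⟩
  · rw [add_mul]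
    exact le_trans (totalDegree_add _ _) (max_le (hd i) (he i))
  · simp only [add_mul, Finset.sum_add_distrib]
    ring

lemma mem_mono {s t : ℕ} (hst : s ≤ t) {p : MvPolynomial (Fin n) ℝ}
    (hp : MemTruncQuadModule g s p) : MemTruncQuadModule g t p := by
  obtain ⟨σ₀, σ, hσ₀, hσ, hd₀, hd, rfl⟩ := hp
  exact ⟨σ₀, σ, hσ₀, hσ, le_trans hd₀ (by omega), fun i => le_trans (hd i) (by omega), rfl⟩

lemma mem_mul_sq {s d : ℕ} {p q : MvPolynomial (Fin n) ℝ}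
    (hp : MemTruncQuadModule g s p) (hq : q.totalDegree ≤ d) :
    MemTruncQuadModule g (s + d) (q ^ 2 * p) := by
  obtain ⟨σ₀, σ, hσ₀, hσ, hd₀, hd, rfl⟩ := hp
  have hq2 : (q ^ 2).totalDegree ≤ 2 * d := by
    calc (q ^ 2).totalDegree ≤ 2 * q.totalDegree := totalDegree_pow _ _
    _ ≤ 2 * d := by omega
  refine ⟨q ^ 2 * σ₀, fun i => q ^ 2 * σ i, sos_mul_sq q hσ₀, fun i => sos_mul_sq q (hσ i),
    ?_, fun i => ?_, ?_⟩
  · calc (q ^ 2 * σ₀).totalDegree ≤ (q ^ 2).totalDegree + σ₀.totalDegree := totalDegree_mul _ _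
    _ ≤ 2 * (s + d) := by omega
  · calc (q ^ 2 * σ i * g i).totalDegree = (q ^ 2 * (σ i * g i)).totalDegree := by ring_nf
    _ ≤ (q ^ 2).totalDegree + (σ i * g i).totalDegree := totalDegree_mul _ _
    _ ≤ 2 * (s + d) := by have := hd i; omega
  · rw [mul_add, Finset.mul_sum]
    simp [mul_assoc]

lemma mem_C_mul {t : ℕ} {c : ℝ} (hc : 0 ≤ c) {p : MvPolynomial (Fin n) ℝ}
    (hp : MemTruncQuadModule g t p) : MemTruncQuadModule g t (C c * p) := by
  have h : (C c : MvPolynomial (Fin n) ℝ) = (C (Real.sqrt c)) ^ 2 := by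
    rw [← map_pow, Real.sq_sqrt hc]
  have := mem_mul_sq (d := 0) (q := C (Real.sqrt c)) g hp
    (le_of_eq (totalDegree_C _))
  rw [h]
  simpa using this

lemma mem_half {t : ℕ} {p : MvPolynomial (Fin n) ℝ}
    (hp : MemTruncQuadModule g t (2 * p)) : MemTruncQuadModule g t p := by
  have := mem_C_mul g (by norm_num : (0:ℝ) ≤ 1/2) hp
  have h2 : (C (1/2 : ℝ) : MvPolynomial (Fin n) ℝ) * (2 * p) = p := by
    rw [show (2 : MvPolynomial (Fin n) ℝ) = C 2 from (map_ofNat C 2).symm,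
      ← mul_assoc, ← C_mul]
    norm_num
  rwa [h2] at this

/-- Splitting a multi-index into two parts, one with prescribed degree. -/
lemma exists_split (α : Fin n →₀ ℕ) :
    ∀ d : ℕ, d ≤ α.sum (fun _ e => e) →
      ∃ β γ : Fin n →₀ ℕ, β + γ = α ∧ β.sum (fun _ e => e) = d := by
  induction α using Finsupp.induction with
  | zero =>
    intro d hd
    simp only [Finsupp.sum_zero_index, Nat.le_zero] at hd
    exact ⟨0, 0, by simp, by simp [hd]⟩
  | single_add a b f haf hb ih =>
    intro d hd
    have hsum : ((Finsupp.single a b + f).sum fun _ e => e) = b + f.sum (fun _ e => e) := by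
      rw [Finsupp.sum_add_index' (fun _ => rfl) (fun _ _ _ => rfl),
        Finsupp.sum_single_index rfl]
    rw [hsum] at hd
    by_cases hdf : d ≤ f.sum (fun _ e => e)
    · obtain ⟨β, γ, hβγ, hβ⟩ := ih d hdf
      exact ⟨β, γ + Finsupp.single a b, by rw [← add_assoc, hβγ]; abel, hβ⟩
    · push_neg at hdf
      set e := d - f.sum (fun _ e => e) with he
      have heb : e ≤ b := by omega
      refine ⟨Finsupp.single a e + f, Finsupp.single a (b - e), ?_, ?_⟩
      · rw [add_comm (Finsupp.single a e) f, add_assoc, ← Finsupp.single_add]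
        rw [Nat.add_sub_cancel' heb]
        abel
      · rw [Finsupp.sum_add_index' (fun _ => rfl) (fun _ _ _ => rfl),
          Finsupp.sum_single_index rfl]
        omega

variable {R : ℝ}

/-- Even monomials: `R^{2t} - x^{2β} ∈ M(g)_{2t}` when `|β| ≤ t`. -/
lemma even_mem (hR : 1 ≤ R)
    (hcoord : ∀ i : Fin n, MemTruncQuadModule g 1 (C (R ^ 2) - X i ^ 2)) :
    ∀ t : ℕ, ∀ β : Fin n →₀ ℕ, β.sum (fun _ e => e) ≤ t →
      MemTruncQuadModule g t (C (R ^ (2 * t)) - (monomial β (1:ℝ)) ^ 2) := by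
  intro t
  induction t with
  | zero =>
    intro β hβ
    have hβ0 : β = 0 := by
      ext a
      simp only [Finsupp.coe_zero, Pi.zero_apply]
      by_contra h
      have ha : a ∈ β.support := Finsupp.mem_support_iff.mpr h
      have : β a ≤ β.sum fun _ e => e := Finset.single_le_sum (fun _ _ => Nat.zero_le _) ha
      omega
    subst hβ0
    simpa using mem_zero g
  | succ t ih =>
    intro β hβ
    by_cases hβ0 : β = 0
    · subst hβ0
      have h1 : (1:ℝ) ≤ R ^ (2 * (t+1)) := one_le_pow₀ hR
      have : C (R ^ (2 * (t+1))) - (monomial (0 : Fin n →₀ ℕ) (1:ℝ)) ^ 2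
          = C (R ^ (2 * (t+1)) - 1) := by
        rw [monomial_zero', map_sub]
        simp
      rw [this]
      exact mem_of_sos g (sos_const (by linarith))
        (le_trans (le_of_eq (totalDegree_C _)) (by omega))
    · obtain ⟨a, ha⟩ : ∃ a, β a ≠ 0 := by
        by_contra h
        push_neg at h
        exact hβ0 (Finsupp.ext fun a => h a)
      have hle : Finsupp.single a 1 ≤ β := Finsupp.single_le_iff.mpr (by omega)
      set β' := β - Finsupp.single a 1 with hβ'
      have hsplit : Finsupp.single a 1 + β' = β := add_tsub_cancel_of_le hle
      have hdeg : β'.sum (fun _ e => e) ≤ t := by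
        have : (Finsupp.single a 1 + β').sum (fun _ e => e)
            = 1 + β'.sum (fun _ e => e) := by
          rw [Finsupp.sum_add_index' (fun _ => rfl) (fun _ _ _ => rfl),
            Finsupp.sum_single_index rfl]
        rw [hsplit] at this
        omega
      have hmon : (monomial β (1:ℝ)) = X a * monomial β' 1 := by
        rw [X, monomial_mul, one_mul, hsplit]
      have key : C (R ^ (2 * (t+1))) - (monomial β (1:ℝ)) ^ 2
          = C (R ^ (2 * t)) * (C (R ^ 2) - X a ^ 2)
            + (X a) ^ 2 * (C (R ^ (2 * t)) - (monomial β' (1:ℝ)) ^ 2) := by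
        have hC : (C (R ^ (2 * (t+1))) : MvPolynomial (Fin n) ℝ)
            = C (R ^ (2 * t)) * C (R ^ 2) := by
          rw [show 2 * (t + 1) = 2 * t + 2 from by ring, pow_add, C_mul]
        rw [hmon, hC]
        ring
      rw [key]
      refine mem_add g ?_ ?_
      · exact mem_C_mul g (by positivity) (mem_mono g (by omega) (hcoord a))
      · exact mem_mul_sq (d := 1) g (ih β' hdeg) (by simp)

/-- General monomials with coefficient: `|c|·R^{2t} - c·x^α ∈ M(g)_{2t}` when `|α| ≤ 2t`. -/
lemma coeff_monomial_mem (hR : 1 ≤ R)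
    (hcoord : ∀ i : Fin n, MemTruncQuadModule g 1 (C (R ^ 2) - X i ^ 2))
    (t : ℕ) (α : Fin n →₀ ℕ) (hα : α.sum (fun _ e => e) ≤ 2 * t) (c : ℝ) :
    MemTruncQuadModule g t (C (|c| * R ^ (2 * t)) - C c * monomial α 1) := by
  obtain ⟨β, γ, hβγ, hβ⟩ := exists_split α ((α.sum fun _ e => e) / 2)
    (Nat.div_le_self _ _)
  have hsums : β.sum (fun _ e => e) + γ.sum (fun _ e => e) = α.sum (fun _ e => e) := by
    rw [← hβγ, Finsupp.sum_add_index' (fun _ => rfl) (fun _ _ _ => rfl)]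
  have hβt : β.sum (fun _ e => e) ≤ t := by omega
  have hγt : γ.sum (fun _ e => e) ≤ t := by omega
  have hmul : (monomial β (1:ℝ)) * monomial γ 1 = monomial α 1 := by
    rw [monomial_mul, one_mul, hβγ]
  have hdegβ : (monomial β (1:ℝ)).totalDegree ≤ t := by
    rw [totalDegree_monomial _ one_ne_zero]; exact hβt
  have hdegγ : (monomial γ (1:ℝ)).totalDegree ≤ t := by
    rw [totalDegree_monomial _ one_ne_zero]; exact hγt
  have hEβ := even_mem g hR hcoord t β hβt
  have hEγ := even_mem g hR hcoord t γ hγt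
  -- memberships of R^{2t} ∓ x^α
  have hminus : MemTruncQuadModule g t (C (R ^ (2 * t)) - monomial α 1) := by
    apply mem_half g
    have hid : 2 * (C (R ^ (2 * t)) - monomial α (1:ℝ))
        = (monomial β 1 - monomial γ 1) ^ 2
          + ((C (R ^ (2 * t)) - (monomial β (1:ℝ)) ^ 2)
            + (C (R ^ (2 * t)) - (monomial γ (1:ℝ)) ^ 2)) := by
      linear_combination (2 : MvPolynomial (Fin n) ℝ) * hmul
    rw [hid]
    refine mem_add g ?_ (mem_add g hEβ hEγ)
    refine mem_of_sos g (sos_sq _) ?_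
    calc ((monomial β (1:ℝ) - monomial γ 1) ^ 2).totalDegree
        ≤ 2 * (monomial β (1:ℝ) - monomial γ 1).totalDegree := totalDegree_pow _ _
      _ ≤ 2 * t := by
          have : (monomial β (1:ℝ) - monomial γ 1).totalDegree ≤ t := by
            rw [sub_eq_add_neg]
            refine le_trans (totalDegree_add _ _) (max_le hdegβ ?_)
            rw [totalDegree_neg]; exact hdegγ
          omega
  have hplus : MemTruncQuadModule g t (C (R ^ (2 * t)) + monomial α 1) := by
    apply mem_half g
    have hid : 2 * (C (R ^ (2 * t)) + monomial α (1:ℝ))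
        = (monomial β 1 + monomial γ 1) ^ 2
          + ((C (R ^ (2 * t)) - (monomial β (1:ℝ)) ^ 2)
            + (C (R ^ (2 * t)) - (monomial γ (1:ℝ)) ^ 2)) := by
      linear_combination (-2 : MvPolynomial (Fin n) ℝ) * hmul
    rw [hid]
    refine mem_add g ?_ (mem_add g hEβ hEγ)
    refine mem_of_sos g (sos_sq _) ?_
    calc ((monomial β (1:ℝ) + monomial γ 1) ^ 2).totalDegree
        ≤ 2 * (monomial β (1:ℝ) + monomial γ 1).totalDegree := totalDegree_pow _ _
      _ ≤ 2 * t := by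
          have : (monomial β (1:ℝ) + monomial γ 1).totalDegree ≤ t :=
            le_trans (totalDegree_add _ _) (max_le hdegβ hdegγ)
          omega
  rcases le_or_gt 0 c with hc | hc
  · have : C (|c| * R ^ (2 * t)) - C c * monomial α (1:ℝ)
        = C c * (C (R ^ (2 * t)) - monomial α 1) := by
      rw [abs_of_nonneg hc, mul_sub, ← C_mul]
    rw [this]
    exact mem_C_mul g hc hminus
  · have : C (|c| * R ^ (2 * t)) - C c * monomial α (1:ℝ)
        = C (-c) * (C (R ^ (2 * t)) + monomial α 1) := by
      rw [abs_of_neg hc, mul_add, ← C_mul, map_neg]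
      ring
    rw [this]
    exact mem_C_mul g (by linarith) hplus

end Aux

/-- if `R² − xᵢ² ∈ M(g)₂` for all `i` with `R ≥ 1`, then for any polynomial
`E` of degree at most `2t`, `R^{2t}·‖E‖₁ − E ∈ M(g)_{2t}`. -/
theorem l1_bound_sub_poly_mem_truncQuadModule
    (n m : ℕ) (hn : 1 ≤ n) (hm : 1 ≤ m)
    (g : Fin m → MvPolynomial (Fin n) ℝ) (R : ℝ) (hR : 1 ≤ R)
    (t : ℕ) (ht : 1 ≤ t)
    (hcoord : ∀ i : Fin n, MemTruncQuadModule g 1 (C (R ^ 2) - X i ^ 2)) :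
    ∀ E : MvPolynomial (Fin n) ℝ, E.totalDegree ≤ 2 * t →
      MemTruncQuadModule g t
        (C (R ^ (2 * t) * ∑ α ∈ E.support, |E.coeff α|) - E) := by
  intro E hE
  have hdecomp : C (R ^ (2 * t) * ∑ α ∈ E.support, |E.coeff α|) - E
      = ∑ α ∈ E.support, (C (|E.coeff α| * R ^ (2 * t)) - C (E.coeff α) * monomial α 1) := by
    rw [Finset.sum_sub_distrib, ← map_sum]
    congr 1
    · congr 1
      rw [Finset.mul_sum]
      exact Finset.sum_congr rfl fun α _ => mul_comm _ _
    · conv_lhs => rw [← support_sum_monomial_coeff E]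
      exact Finset.sum_congr rfl fun α _ => by rw [C_mul_monomial, mul_one, coeff]
  rw [hdecomp]
  refine Finset.sum_induction _ (MemTruncQuadModule g t) (fun a b ha hb => mem_add g ha hb)
    (mem_zero g) (fun α hα => ?_)
  exact coeff_monomial_mem g hR hcoord t α (le_trans (le_totalDegree hα) hE) _
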